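/- arXiv:2503.05062 — 2 statements merged into one kernel-verified Lean document; each statement's English description precedes it below -/
import Mathlib

section
/- Let F_q be a finite field, a_1,…,a_n ∈ F_q pairwise distinct, 1 ≤ k ≤ n, and m ≥ 1. Let IRS_m(n,k) denote the set of m×n matrices over F_q each of whose rows is a codeword of RS[n,k] = {(f(a_1),…,f(a_n)) : f ∈ F_q[X], deg f < k}. Then for every R ∈ F_q^{m×n}, the number of codewords C ∈ IRS_m(n,k) such that R − C is an (n−k)-burst matrix is at most k + 1. In particular IRS_m(n,k) is (1 − k/n, O(n))-burst list-decodable. (Lemma 4.3 of the paper.) -/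
/-!
Let `t = min(s, k)`, where `s` is the first nonzero column of `R - C`. The burst condition forces
every nonzero column of `R - C` into the window `[t, t + n - k)`, so `C` agrees with `R` on the
`k` columns outside that window. Two codewords sharing the same `t` therefore agree on `k`
evaluation points in every row, and polynomials of degree `< k` are determined by `k` values.
Hence `C ↦ t ∈ {0, …, k}` is injective on the list.
-/

open Polynomial Finset

theorem Set.ncard_le_card_of_subset_iUnion_subsingleton {α ι : Type*} [Fintype ι]
    {S : Set α} {W : ι → Set α} (hW : ∀ i, (W i).Subsingleton) (hS : S ⊆ ⋃ i, W i) :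
    S.ncard ≤ Fintype.card ι :=
  calc S.ncard ≤ (⋃ i, W i).ncard :=
        Set.ncard_le_ncard hS (Set.finite_iUnion fun i => (hW i).finite)
    _ ≤ ∑ i, (W i).ncard := Set.ncard_iUnion_le_of_fintype W
    _ ≤ ∑ _ : ι, 1 := Finset.sum_le_sum fun i _ =>
        (Set.ncard_le_one (hW i).finite).2 fun _ hx _ hy => hW i hx hy
    _ = Fintype.card ι := by simp

def colWindow (n t ℓ : ℕ) : Finset (Fin n) := {j | t ≤ (j : ℕ) ∧ (j : ℕ) < t + ℓ}

theorem card_colWindow_le (n t ℓ : ℕ) : #(colWindow n t ℓ) ≤ ℓ := by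
  calc #(colWindow n t ℓ) ≤ #(Ico t (t + ℓ)) :=
        card_le_card_of_injOn Fin.val (fun j hj => by simpa [colWindow] using hj)
          Fin.val_injective.injOn
    _ = ℓ := by simp

theorem sub_le_card_compl_colWindow (n t ℓ : ℕ) : n - ℓ ≤ #(colWindow n t ℓ)ᶜ := by
  rw [card_compl, Fintype.card_fin]
  exact Nat.sub_le_sub_left (card_colWindow_le n t ℓ) n

section Burst

variable {α : Type*} [Zero α] {m n : ℕ}

def Matrix.IsBurst (ℓ : ℕ) (E : Matrix (Fin m) (Fin n) α) : Prop :=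
  ∀ j j' : Fin n, (∃ i, E i j ≠ 0) → (∃ i, E i j' ≠ 0) → (j' : ℕ) - (j : ℕ) < ℓ

theorem Matrix.IsBurst.exists_colWindow {ℓ : ℕ} {E : Matrix (Fin m) (Fin n) α}
    (hE : E.IsBurst ℓ) :
    ∃ t ≤ n - ℓ, ∀ i, ∀ j ∉ colWindow n t ℓ, E i j = 0 := by
  classical
  by_cases hnz : ∃ j, ∃ i, E i j ≠ 0
  · obtain ⟨j₀, hj₀⟩ := hnz
    obtain ⟨s, hs, hmin⟩ := exists_min_image {j | ∃ i, E i j ≠ 0} (fun j : Fin n => (j : ℕ))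
      ⟨j₀, (mem_filter_univ j₀).2 hj₀⟩
    rw [mem_filter_univ] at hs
    refine ⟨min s (n - ℓ), min_le_right _ _, fun i j hj => ?_⟩
    by_contra hij
    have hsj : (s : ℕ) ≤ j := hmin j ((mem_filter_univ j).2 ⟨i, hij⟩)
    have hgap := hE s j hs ⟨i, hij⟩
    have hjn := j.isLt
    simp only [colWindow, mem_filter_univ] at hj
    omega
  · simp only [not_exists, not_not] at hnz
    exact ⟨0, Nat.zero_le _, fun i j _ => hnz j i⟩

end Burst

section ReedSolomon

variable {F : Type*} [Field F] {m n k : ℕ} {a : Fin n → F}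

def IsRSCodeword (a : Fin n → F) (k : ℕ) (v : Fin n → F) : Prop :=
  ∃ f : F[X], f.degree < k ∧ ∀ j, v j = f.eval (a j)

theorem IsRSCodeword.eq_of_eqOn (ha : Function.Injective a) {u v : Fin n → F}
    (hu : IsRSCodeword a k u) (hv : IsRSCodeword a k v) {T : Finset (Fin n)} (hT : k ≤ #T)
    (huv : ∀ j ∈ T, u j = v j) : u = v := by
  classical
  obtain ⟨f, hf, hfu⟩ := hu
  obtain ⟨g, hg, hgv⟩ := hv
  have hfg : f = g := by
    refine eq_of_degree_sub_lt_of_eval_finset_eq (T.image a) ?_ ?_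
    · rw [card_image_of_injective T ha]
      exact (degree_sub_le f g).trans_lt (max_lt hf hg) |>.trans_le (by exact_mod_cast hT)
    · simp only [mem_image, forall_exists_index, and_imp]
      rintro _ j hj rfl
      rw [← hfu, ← hgv, huv j hj]
  funext j
  rw [hfu, hgv, hfg]

theorem subsingleton_irs_eqOn_compl (ha : Function.Injective a) (R : Matrix (Fin m) (Fin n) F)
    {J : Finset (Fin n)} (hJ : k ≤ #Jᶜ) :
    {C : Matrix (Fin m) (Fin n) F |
      (∀ i, IsRSCodeword a k (C i)) ∧ ∀ i, ∀ j ∉ J, (R - C) i j = 0}.Subsingleton := by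
  rintro C ⟨hC, hCR⟩ C' ⟨hC', hC'R⟩
  funext i
  refine (hC i).eq_of_eqOn ha (hC' i) hJ fun j hj => ?_
  have h := hCR i j (mem_compl.1 hj)
  have h' := hC'R i j (mem_compl.1 hj)
  rw [Matrix.sub_apply, sub_eq_zero] at h h'
  rw [← h, ← h']

end ReedSolomon

theorem irs_burst_list_decodable_general
    (F : Type*) [Field F]
    (n k m : ℕ) (hkn : k ≤ n)
    (a : Fin n → F) (ha : Function.Injective a)
    (R : Matrix (Fin m) (Fin n) F) :
    Set.ncard {C : Matrix (Fin m) (Fin n) F |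
        (∀ i : Fin m, ∃ f : Polynomial F, f.degree < k ∧ ∀ j, C i j = f.eval (a j)) ∧
        (∀ j j' : Fin n, (∃ i, (R - C) i j ≠ 0) → (∃ i, (R - C) i j' ≠ 0) →
          (j' : ℕ) - (j : ℕ) < n - k)} ≤ k + 1 := by
  have hcompl (t : ℕ) : k ≤ #(colWindow n t (n - k))ᶜ :=
    (Nat.sub_sub_self hkn).ge.trans (sub_le_card_compl_colWindow n t (n - k))
  calc _ ≤ Fintype.card (Fin (k + 1)) := by
        refine Set.ncard_le_card_of_subset_iUnion_subsingleton
          (fun t : Fin (k + 1) => subsingleton_irs_eqOn_compl ha R (hcompl t)) ?_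
        rintro C ⟨hC, hburst⟩
        obtain ⟨t, ht, hwin⟩ := Matrix.IsBurst.exists_colWindow hburst
        exact Set.mem_iUnion.2 ⟨⟨t, by omega⟩, hC, hwin⟩
    _ = k + 1 := Fintype.card_fin _

/-- Lemma 4.3 of the paper. For every received matrix `R`,
the number of codewords `C` of the `m`-interleaved Reed–Solomon code
`IRS_m(n,k)` such that `R - C` is an `(n-k)`-burst matrix is at most `k + 1`. -/
theorem irs_burst_list_decodable
    (F : Type*) [Field F] [Fintype F] [DecidableEq F]
    (n k m : ℕ) (hm : 1 ≤ m) (hk : 1 ≤ k) (hkn : k ≤ n)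
    (a : Fin n → F) (ha : Function.Injective a)
    (R : Matrix (Fin m) (Fin n) F) :
    Set.ncard {C : Matrix (Fin m) (Fin n) F |
        (∀ i : Fin m, ∃ f : Polynomial F, f.degree < k ∧ ∀ j, C i j = f.eval (a j)) ∧
        (∀ j j' : Fin n, (∃ i, (R - C) i j ≠ 0) → (∃ i, (R - C) i j' ≠ 0) →
          (j' : ℕ) - (j : ℕ) < n - k)} ≤ k + 1 :=
  irs_burst_list_decodable_general F n k m hkn a ha R
end

section
/- Let ℓ be a prime power, F_q = F_{ℓ^u}, T a multiplicative subgroup of F_ℓ^* of order t, W ⊆ F_q an F_ℓ-linear subspace, L(X) = ∏_{α∈W}(X − α), and γ ∈ F_q with L(γ) ≠ 0. Let n_s be a positive integer dividing t. Then {L(a)^{t/n_s} : a ∈ F_q, L(a)^t = L(γ)^t} = {ω·L(γ)^{t/n_s} : ω ∈ F_q, ω^{n_s} = 1}; that is, the image of the root set of L(X)^t − L(γ)^t under the map a ↦ L(a)^{t/n_s} is a coset of the group of n_s-th roots of unity in F_q^*, and it has exactly n_s elements. -/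
/-!
`T` is cyclic of order `t`, so a generator of `T` is a primitive `t`-th root of unity and every
`n_s`-th root of unity is `β ^ (t / n_s)` for some `β ∈ T`. Since `T ⊆ F_ℓ`, the subspace
polynomial satisfies `L(βx) = βL(x)` for `β ∈ T`, so `x = βγ` realises the coset element
`β ^ (t / n_s) · L(γ) ^ (t / n_s)`. Conversely `(L(x) / L(γ)) ^ (t / n_s)` is an `n_s`-th root of
unity whenever `L(x) ^ t = L(γ) ^ t`.
-/

open Polynomial

section Field

variable {F : Type*} [Field F]

theorem eval_mul_prod_X_sub_C {s : Finset F} {β : F} (hβ : β ≠ 0)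
    (hs : ∀ α, β * α ∈ s ↔ α ∈ s) (x : F) :
    (∏ α ∈ s, (X - C α)).eval (β * x) = β ^ s.card * (∏ α ∈ s, (X - C α)).eval x := by
  simp only [eval_prod, eval_sub, eval_X, eval_C]
  calc ∏ α ∈ s, (β * x - α) = ∏ α ∈ s, (β * x - β * α) :=
        (Finset.prod_equiv (Equiv.mulLeft₀ β hβ) (fun α => (hs α).symm) fun _ _ => rfl).symm
    _ = β ^ s.card * ∏ α ∈ s, (x - α) := by
        rw [← Finset.prod_const, ← Finset.prod_mul_distrib]
        simp only [mul_sub]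

theorem Subgroup.exists_isPrimitiveRoot_natCard (T : Subgroup Fˣ) [Finite T] :
    ∃ ξ ∈ T, IsPrimitiveRoot (ξ : F) (Nat.card T) := by
  obtain ⟨g, hg⟩ := IsCyclic.exists_ofOrder_eq_natCard (α := T)
  refine ⟨g, g.2, IsPrimitiveRoot.coe_units_iff.mpr ?_⟩
  rw [← hg, ← Subgroup.orderOf_coe]
  exact IsPrimitiveRoot.orderOf _

theorem Subgroup.exists_eq_pow_of_pow_eq_one (T : Subgroup Fˣ) [Finite T]
    {n : ℕ} (hn : n ∣ Nat.card T) {ω : F} (hω : ω ^ n = 1) :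
    ∃ β ∈ T, ω = (β : F) ^ (Nat.card T / n) := by
  obtain ⟨ξ, hξT, hξ⟩ := T.exists_isPrimitiveRoot_natCard
  have : NeZero n := ⟨ne_zero_of_dvd_ne_zero Nat.card_pos.ne' hn⟩
  obtain ⟨i, -, rfl⟩ :=
    (hξ.pow Nat.card_pos (Nat.div_mul_cancel hn).symm).eq_pow_of_pow_eq_one hω
  exact ⟨ξ ^ i, pow_mem hξT i, by rw [Units.val_pow_eq_pow_val, ← pow_mul, ← pow_mul, mul_comm]⟩

theorem ncard_setOf_pow_eq_one_mul {n : ℕ} (hn : 0 < n) {ζ : F} (hζ : IsPrimitiveRoot ζ n)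
    {c : F} (hc : c ≠ 0) :
    {z : F | ∃ ω : F, ω ^ n = 1 ∧ z = ω * c}.ncard = n := by
  have himage : {z : F | ∃ ω : F, ω ^ n = 1 ∧ z = ω * c} =
      (· * c) '' (nthRootsFinset n (1 : F) : Set F) := by
    ext z
    simp [mem_nthRootsFinset hn, eq_comm]
  rw [himage, Set.ncard_image_of_injective _ (mul_left_injective₀ hc), Set.ncard_coe_finset,
    hζ.card_nthRootsFinset]

theorem setOf_pow_div_eq_setOf_mul (T : Subgroup Fˣ) [Finite T]
    (f : F → F) (hf : ∀ β ∈ T, ∀ x, f (β * x) = β * f x) {γ : F} (hγ : f γ ≠ 0)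
    {n : ℕ} (hn : n ∣ Nat.card T) :
    {z : F | ∃ x : F, f x ^ Nat.card T = f γ ^ Nat.card T ∧ z = f x ^ (Nat.card T / n)} =
      {z : F | ∃ ω : F, ω ^ n = 1 ∧ z = ω * f γ ^ (Nat.card T / n)} := by
  have hdiv : Nat.card T / n * n = Nat.card T := Nat.div_mul_cancel hn
  ext z
  constructor
  · rintro ⟨x, hx, rfl⟩
    refine ⟨f x ^ (Nat.card T / n) / f γ ^ (Nat.card T / n), ?_, by field_simp⟩
    rw [div_pow, ← pow_mul, ← pow_mul, hdiv, hx, div_self (pow_ne_zero _ hγ)]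
  · rintro ⟨ω, hω, rfl⟩
    obtain ⟨β, hβT, rfl⟩ := T.exists_eq_pow_of_pow_eq_one hn hω
    have hβ1 : (β : F) ^ Nat.card T = 1 := by
      rw [← Units.val_pow_eq_pow_val, ← Units.val_one, Units.val_inj]
      exact congrArg Subtype.val (pow_card_eq_one' (x := (⟨β, hβT⟩ : T)))
    refine ⟨β * γ, ?_, ?_⟩ <;> rw [hf β hβT, mul_pow]
    rw [hβ1, one_mul]

end Field

section SubspacePoly

variable {F : Type*} [Field F] [Finite F] {K : Subfield F}

noncomputable def subspacePoly (W : Submodule K F) : F[X] :=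
  ∏ α ∈ (Set.toFinite (W : Set F)).toFinset, (X - C α)

theorem subspacePoly_eval_mul (W : Submodule K F) {β : F} (hβ : β ∈ K) (x : F) :
    (subspacePoly W).eval (β * x) = β * (subspacePoly W).eval x := by
  rcases eq_or_ne β 0 with rfl | hβ0
  · simp only [zero_mul, subspacePoly, eval_prod, eval_sub, eval_X, eval_C]
    exact Finset.prod_eq_zero (by simp) (sub_self 0)
  have hs : ∀ α, β * α ∈ (Set.toFinite (W : Set F)).toFinset ↔
      α ∈ (Set.toFinite (W : Set F)).toFinset := by
    intro α
    simpa [Subfield.smul_def] using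
      W.smul_mem_iff (s := (⟨β, hβ⟩ : K)) (x := α) (fun h => hβ0 (congrArg Subtype.val h))
  rw [subspacePoly, eval_mul_prod_X_sub_C hβ0 hs]
  have : Fintype K := Fintype.ofFinite K
  have : Fintype W := Fintype.ofFinite W
  -- `β ^ |W| = β` because `|W|` is a power of `|K|`.
  have hcard : (Set.toFinite (W : Set F)).toFinset.card = Fintype.card K ^ Module.finrank K W := by
    rw [Set.Finite.card_toFinset, ← Module.card_eq_pow_finrank]
    rfl
  rw [hcard]
  congr 1
  simpa using congrArg Subtype.val (FiniteField.pow_card_pow (Module.finrank K W) (⟨β, hβ⟩ : K))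

end SubspacePoly

theorem subspace_poly_image_coset_general
    (F : Type*) [Field F] [Fintype F]
    (K : Subfield F)
    (T : Subgroup Fˣ) (hT : ∀ x : Fˣ, x ∈ T → (x : F) ∈ K)
    (t : ℕ) (ht : Nat.card T = t)
    (W : Submodule K F)
    (L : Polynomial F)
    (hL : L = ∏ α ∈ (Set.toFinite (W : Set F)).toFinset, (X - C α))
    (γ : F) (hγ : L.eval γ ≠ 0)
    (ns : ℕ) (hdvd : ns ∣ t) :
    {z : F | ∃ x : F, (L.eval x) ^ t = (L.eval γ) ^ t ∧ z = (L.eval x) ^ (t / ns)} =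
      {z : F | ∃ ω : F, ω ^ ns = 1 ∧ z = ω * (L.eval γ) ^ (t / ns)} ∧
    Set.ncard {z : F | ∃ x : F,
        (L.eval x) ^ t = (L.eval γ) ^ t ∧ z = (L.eval x) ^ (t / ns)} = ns := by
  change L = subspacePoly W at hL
  subst hL ht
  have hcoset := setOf_pow_div_eq_setOf_mul T (subspacePoly W).eval
    (fun β hβ => subspacePoly_eval_mul W (hT β hβ)) hγ hdvd
  refine ⟨hcoset, ?_⟩
  obtain ⟨ξ, -, hξ⟩ := T.exists_isPrimitiveRoot_natCard
  rw [hcoset]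
  exact ncard_setOf_pow_eq_one_mul (Nat.pos_of_dvd_of_pos hdvd Nat.card_pos)
    (hξ.pow Nat.card_pos (Nat.div_mul_cancel hdvd).symm) (pow_ne_zero _ hγ)

/-- With `L` the subspace polynomial of the `F_ℓ`-subspace `W`,
`T ≤ F_ℓ^*` of order `t`, `γ` with `L(γ) ≠ 0`, and `n_s ∣ t`: the image of the
root set of `L(X)^t - L(γ)^t` under `a ↦ L(a)^{t/n_s}` is exactly the coset
`{ω·L(γ)^{t/n_s} : ω^{n_s} = 1}` of the `n_s`-th roots of unity, and it has
exactly `n_s` elements. -/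
theorem subspace_poly_image_coset
    (F : Type*) [Field F] [Fintype F] [DecidableEq F]
    (ℓ u : ℕ) (hℓ : IsPrimePow ℓ) (hF : Fintype.card F = ℓ ^ u)
    (K : Subfield F) (hK : Nat.card K = ℓ)
    (T : Subgroup Fˣ) (hT : ∀ x : Fˣ, x ∈ T → (x : F) ∈ K)
    (t : ℕ) (ht : Nat.card T = t)
    (W : Submodule K F)
    (L : Polynomial F)
    (hL : L = ∏ α ∈ (Set.toFinite (W : Set F)).toFinset, (X - C α))
    (γ : F) (hγ : L.eval γ ≠ 0)
    (ns : ℕ) (hns : 0 < ns) (hdvd : ns ∣ t) :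
    {z : F | ∃ x : F, (L.eval x) ^ t = (L.eval γ) ^ t ∧ z = (L.eval x) ^ (t / ns)} =
      {z : F | ∃ ω : F, ω ^ ns = 1 ∧ z = ω * (L.eval γ) ^ (t / ns)} ∧
    Set.ncard {z : F | ∃ x : F,
        (L.eval x) ^ t = (L.eval γ) ^ t ∧ z = (L.eval x) ^ (t / ns)} = ns :=
  subspace_poly_image_coset_general F K T hT t ht W L hL γ hγ ns hdvd
end
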